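/- For every word w over the alphabet (V∖{x})∪{y,z} and every letter t∈(V∖{x})∪{y,z}, the FCFS transitions commute with aggregation: φ(e^{G_yz}_t(w)) = e^{G_x}_{ψ(t)}(φ(w)). In particular, the arrival of y and the arrival of z have the same effect on the aggregated word: φ(e^{G_yz}_y(w)) = φ(e^{G_yz}_z(w)) = e^{G_x}_x(φ(w)). -/

import Mathlib

open Classical Finset

noncomputable section

def nbr {V : Type} [Fintype V] (G : SimpleGraph V) (S : Finset V) : Finset V :=
  Finset.univ.filter fun j => ∃ i ∈ S, G.Adj i j

def aSum {V : Type} (α : V → ℝ) (S : Finset V) : ℝ := ∑ i ∈ S, α i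

def IsIndep {V : Type} (G : SimpleGraph V) (I : Finset V) : Prop :=
  I.Nonempty ∧ ∀ i ∈ I, ∀ j ∈ I, ¬ G.Adj i j

def indepSets {V : Type} [Fintype V] (G : SimpleGraph V) : Finset (Finset V) :=
  Finset.univ.filter fun I => IsIndep G I

def Ncond {V : Type} [Fintype V] (G : SimpleGraph V) (α : V → ℝ) : Prop :=
  ∀ I ∈ indepSets G, aSum α I < aSum α (nbr G I)

def Tlist {V : Type} [Fintype V] [DecidableEq V] (G : SimpleGraph V) (α : V → ℝ) :
    List V → Finset V → ℝ
  | [], _ => 1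
  | i :: l, P =>
      α i / (aSum α (nbr G (insert i P)) - aSum α (insert i P)) * Tlist G α l (insert i P)

def Erat {V : Type} [Fintype V] [DecidableEq V] (G : SimpleGraph V) (α : V → ℝ) :
    List V → Finset V → ℝ
  | [], _ => 0
  | i :: l, P =>
      aSum α (nbr G (insert i P)) / (aSum α (nbr G (insert i P)) - aSum α (insert i P)) +
        Erat G α l (insert i P)

def TI {V : Type} [Fintype V] [DecidableEq V] (G : SimpleGraph V) (α : V → ℝ) (I : Finset V) : ℝ :=
  ∑ l ∈ I.toList.permutations.toFinset, Tlist G α l ∅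

def EI {V : Type} [Fintype V] [DecidableEq V] (G : SimpleGraph V) (α : V → ℝ) (I : Finset V) : ℝ :=
  ∑ l ∈ I.toList.permutations.toFinset, Erat G α l ∅ * Tlist G α l ∅

def meanQ {V : Type} [Fintype V] [DecidableEq V] (G : SimpleGraph V) (α : V → ℝ) : ℝ :=
  (1 + ∑ I ∈ indepSets G, TI G α I)⁻¹ * ∑ I ∈ indepSets G, EI G α I

def IsWord {V : Type} (G : SimpleGraph V) (w : List V) : Prop :=
  w.Pairwise fun a b => ¬ G.Adj a b

def piHatAux {V : Type} [Fintype V] [DecidableEq V] (G : SimpleGraph V) (α : V → ℝ) :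
    List V → Finset V → ℝ
  | [], _ => 1
  | i :: l, P => α i / aSum α (nbr G (insert i P)) * piHatAux G α l (insert i P)

def piHat {V : Type} [Fintype V] [DecidableEq V] (G : SimpleGraph V) (α : V → ℝ) (w : List V) : ℝ :=
  piHatAux G α w ∅

def addEdge {V : Type} (G : SimpleGraph V) (u v : V) : SimpleGraph V :=
  G ⊔ SimpleGraph.fromEdgeSet {s(u, v)}

end

def psiMap {V : Type} (x : V) : V ⊕ Unit → V := Sum.elim id fun _ => x

def Gyz {V : Type} (G : SimpleGraph V) (x : V) : SimpleGraph (V ⊕ Unit) :=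
  SimpleGraph.comap (psiMap x) G

noncomputable def betaArr {V : Type} [DecidableEq V] (α : V → ℝ) (x : V) (by_ bz : ℝ) :
    V ⊕ Unit → ℝ :=
  Sum.elim (fun v => if v = x then by_ else α v) fun _ => bz

noncomputable def fcfs {V : Type} (G : SimpleGraph V) (t : V) (w : List V) : List V :=
  if ∃ a ∈ w, G.Adj t a then w.eraseP (fun a => decide (G.Adj t a)) else w ++ [t]

theorem map_fcfs_comap {W V : Type} (G : SimpleGraph V) (f : W → V) (w : List W) (t : W) :
    (fcfs (G.comap f) t w).map f = fcfs G (f t) (w.map f) := by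
  have hexists : (∃ a ∈ w, (G.comap f).Adj t a) ↔ ∃ b ∈ w.map f, G.Adj (f t) b := by
    simp only [SimpleGraph.comap_adj, List.mem_map, exists_exists_and_eq_and]
  unfold fcfs
  by_cases h : ∃ a ∈ w, (G.comap f).Adj t a
  · rw [if_pos h, if_pos (hexists.mp h), List.eraseP_map]
    rfl
  · rw [if_neg h, if_neg (mt hexists.mpr h), List.map_append, List.map_singleton]

theorem stmt14 {V : Type} (G : SimpleGraph V) (x : V) :
    (∀ (w : List (V ⊕ Unit)) (t : V ⊕ Unit),
      (fcfs (Gyz G x) t w).map (psiMap x) = fcfs G (psiMap x t) (w.map (psiMap x))) ∧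
    (∀ w : List (V ⊕ Unit),
      (fcfs (Gyz G x) (Sum.inl x) w).map (psiMap x) = fcfs G x (w.map (psiMap x)) ∧
      (fcfs (Gyz G x) (Sum.inr ()) w).map (psiMap x) = fcfs G x (w.map (psiMap x))) :=
  ⟨map_fcfs_comap G (psiMap x), fun w =>
    ⟨map_fcfs_comap G (psiMap x) w (Sum.inl x), map_fcfs_comap G (psiMap x) w (Sum.inr ())⟩⟩
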